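/- For the half-line harmonic oscillator L(η) = -d²/dx² + (x+η)² on (-∞,0) with Dirichlet boundary condition at 0 (equivalently -d²/dx² + x² on (-∞,η) with Dirichlet condition at η), each Dirichlet eigenvalue λ_{D,n}(η) is strictly greater than 2n+1 for all real η. -/

import Mathlib

open MeasureTheory Set Filter Topology Real

/-- `u` is an L²-normalized eigenfunction of the harmonic oscillator `-d²/dx² + x²`
on the half-line `(-∞, η]` with eigenvalue `lam`. -/
def IsOscEigenfun (η lam : ℝ) (u : ℝ → ℝ) : Prop :=
  ContDiff ℝ 2 u ∧
  (∀ x : ℝ, x ≤ η → -(deriv (deriv u)) x + x ^ 2 * u x = lam * u x) ∧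
  Integrable (fun x => (u x) ^ 2) (volume.restrict (Iic η)) ∧
  ∫ x in Iic η, (u x) ^ 2 = 1

/-- `lam` is an eigenvalue of `-d²/dx² + x²` on `(-∞, η)` with Dirichlet condition at `η`. -/
def IsDirEV (η lam : ℝ) : Prop := ∃ u, IsOscEigenfun η lam u ∧ u η = 0

/-- `lam` is an eigenvalue of `-d²/dx² + x²` on `(-∞, η)` with Neumann condition at `η`. -/
def IsNeuEV (η lam : ℝ) : Prop := ∃ u, IsOscEigenfun η lam u ∧ deriv u η = 0

/-- `lam` enumerates, in strictly increasing order, all values satisfying `P`. -/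
def EnumeratesEV (P : ℝ → Prop) (lam : ℕ → ℝ) : Prop :=
  StrictMono lam ∧ (∀ n, P (lam n)) ∧ ∀ t, P t → ∃ n, lam n = t

/-!
Writing the eigenvalue equation as `u'' = (x² - λ) u`, everything follows from Sturm
comparison on `(-∞, η]`. For solutions of `u'' = q₁ u` and `v'' = q₂ v` with `q₂ < q₁`, the
Wronskian `W = u' v - u v'` has derivative `(q₁ - q₂) u v`, so `v` vanishes between any two zeros
of `u` and, if `W → 0` at `-∞`, also to the left of any zero of `u`. Square-integrable solutions
satisfy `u, u' → 0` at `-∞`: where `x² ≥ λ`, both `u u'` and `u'²` are monotone.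

By induction, an eigenfunction of `λ_{D,n}(η)` therefore has at least `n + 1` zeros in
`(-∞, η]`: the `n` given by comparison with the eigenfunction of `λ_{D,n-1}(η)`, plus `η`.
The Hermite function `e^{-x²/2} H_n` solves the equation for `λ = 2n + 1` and has only `n`
zeros. If `λ_{D,n}(η) < 2n + 1`, comparison gives it at least `n + 1` zeros. If
`λ_{D,n}(η) = 2n + 1`, the Wronskian is constant, hence zero, so every zero of the eigenfunction
is a zero of the Hermite function.
-/

section Monotonicity

variable {D : Set ℝ} {f f' : ℝ → ℝ}

theorem Convex.monotoneOn_of_hasDerivAt_nonneg (hD : Convex ℝ D)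
    (hf : ∀ x ∈ D, HasDerivAt f (f' x) x) (hf' : ∀ x ∈ interior D, 0 ≤ f' x) : MonotoneOn f D :=
  monotoneOn_of_hasDerivWithinAt_nonneg hD (fun x hx => (hf x hx).continuousAt.continuousWithinAt)
    (fun x hx => (hf x (interior_subset hx)).hasDerivWithinAt) hf'

theorem Convex.strictMonoOn_of_hasDerivAt_pos (hD : Convex ℝ D)
    (hf : ∀ x ∈ D, HasDerivAt f (f' x) x) (hf' : ∀ x ∈ interior D, 0 < f' x) :
    StrictMonoOn f D :=
  strictMonoOn_of_hasDerivWithinAt_pos hD (fun x hx => (hf x hx).continuousAt.continuousWithinAt)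
    (fun x hx => (hf x (interior_subset hx)).hasDerivWithinAt) hf'

end Monotonicity

theorem eqOn_zero_of_norm_deriv_le_mul_norm {E : Type*} [NormedAddCommGroup E]
    [NormedSpace ℝ E] {F F' : ℝ → E} {K a b x₀ : ℝ}
    (hF : ∀ x ∈ Icc a b, HasDerivAt F (F' x) x) (hbound : ∀ x ∈ Icc a b, ‖F' x‖ ≤ K * ‖F x‖)
    (hx₀ : x₀ ∈ Icc a b) (h0 : F x₀ = 0) : EqOn F 0 (Icc a b) := by
  have hright : ∀ x ∈ Icc x₀ b, F x = 0 :=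
    eq_zero_of_abs_deriv_le_mul_abs_self_of_eq_zero_right
      (fun x hx => (hF x ⟨hx₀.1.trans hx.1, hx.2⟩).continuousAt.continuousWithinAt)
      (fun x hx => (hF x ⟨hx₀.1.trans hx.1, hx.2.le⟩).hasDerivWithinAt) h0
      (fun x hx => hbound x ⟨hx₀.1.trans hx.1, hx.2.le⟩)
  have hF_neg : ∀ t ∈ Icc (-x₀) (-a), HasDerivAt (fun t => F (-t)) (-F' (-t)) t := fun t ht => by
    simpa [Function.comp_def] using
      (hF (-t) ⟨by linarith [ht.2], by linarith [ht.1, hx₀.2]⟩).scomp t (hasDerivAt_neg t)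
  have hleft : ∀ t ∈ Icc (-x₀) (-a), F (-t) = 0 :=
    eq_zero_of_abs_deriv_le_mul_abs_self_of_eq_zero_right
      (fun t ht => (hF_neg t ht).continuousAt.continuousWithinAt)
      (fun t ht => (hF_neg t (Ico_subset_Icc_self ht)).hasDerivWithinAt) (by simpa using h0)
      (fun t ht => by
        simpa using hbound (-t) ⟨by linarith [ht.2], by linarith [ht.1, hx₀.2]⟩)
  intro x hx
  rcases le_total x₀ x with h | h
  · exact hright x ⟨h, hx.2⟩
  · simpa using hleft (-x) ⟨neg_le_neg h, neg_le_neg hx.1⟩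

theorem not_integrableOn_Iic_of_le {g : ℝ → ℝ} {ε c : ℝ} (hε : 0 < ε)
    (hg : ∀ x ≤ c, ε ≤ g x) : ¬ IntegrableOn g (Iic c) := by
  intro hint
  have : IntegrableOn (fun _ => ε) (Iic c) :=
    hint.mono' (by fun_prop) <| (ae_restrict_mem measurableSet_Iic).mono fun x hx => by
      rw [Real.norm_of_nonneg hε.le]; exact hg x hx
  simp [integrableOn_const_iff, hε.ne'] at this

theorem MonotoneOn.tendsto_atBot_zero {g : ℝ → ℝ} {b : ℝ} (hg : MonotoneOn g (Iic b))
    (hg0 : ∀ x ≤ b, 0 ≤ g x) (hsmall : ∀ ε > 0, ∃ x ≤ b, g x < ε) :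
    Tendsto g atBot (𝓝 0) := by
  rw [Metric.tendsto_nhds]
  intro ε hε
  obtain ⟨x₁, hx₁b, hx₁⟩ := hsmall ε hε
  filter_upwards [Iic_mem_atBot x₁] with x hx
  have hxb : x ≤ b := (mem_Iic.1 hx).trans hx₁b
  rw [Real.dist_0_eq_abs, abs_of_nonneg (hg0 x hxb)]
  exact (hg hxb hx₁b hx).trans_lt hx₁

theorem tendsto_zero_of_tendsto_sq {g : ℝ → ℝ} {l : Filter ℝ}
    (hg : Tendsto (fun x => g x ^ 2) l (𝓝 0)) : Tendsto g l (𝓝 0) := by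
  rw [tendsto_zero_iff_abs_tendsto_zero]
  simpa [Real.sqrt_sq_eq_abs, Function.comp_def] using hg.sqrt

theorem IsPreconnected.exists_forall_mul_pos {s : Set ℝ} {f : ℝ → ℝ} (hs : IsPreconnected s)
    (hf : ContinuousOn f s) (h0 : ∀ x ∈ s, f x ≠ 0) : ∃ σ : ℝ, ∀ x ∈ s, 0 < σ * f x := by
  by_contra! h
  obtain ⟨x, hx, hfx⟩ := h 1
  obtain ⟨y, hy, hfy⟩ := h (-1)
  obtain ⟨z, hz, hfz⟩ := hs.intermediate_value hx hy hf
    (show (0 : ℝ) ∈ Icc (f x) (f y) from ⟨by linarith, by linarith⟩)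
  exact h0 z hz hfz

theorem exists_last_zero_Ico {w : ℝ → ℝ} {w' a₀ b : ℝ} (hw : Continuous w)
    (hb : HasDerivAt w w' b) (hw' : w' ≠ 0) (ha₀ : a₀ < b) (ha₀0 : w a₀ = 0) :
    ∃ a ∈ Ico a₀ b, w a = 0 ∧ ∀ x ∈ Ioo a b, w x ≠ 0 := by
  -- `w` has no zeros on some `(l, b)`; take the greatest zero in `[a₀, l]`
  obtain ⟨l, hlb, hl⟩ := mem_nhdsLT_iff_exists_Ioo_subset.1
    ((hb.eventually_ne (c := 0) hw').filter_mono (nhdsLT_le_nhdsNE b))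
  have ha₀l : a₀ ≤ l := by
    by_contra! h
    exact hl ⟨h, ha₀⟩ ha₀0
  obtain ⟨a, ⟨haI, ha0⟩, hmax⟩ := (isCompact_Icc.inter_right (isClosed_eq hw continuous_const)
    : IsCompact (Icc a₀ l ∩ {x | w x = 0})).exists_isGreatest ⟨a₀, left_mem_Icc.2 ha₀l, ha₀0⟩
  refine ⟨a, ⟨haI.1, haI.2.trans_lt hlb⟩, ha0, fun x hx hx0 => ?_⟩
  rcases le_or_gt x l with hxl | hlx
  · exact (hmax ⟨⟨haI.1.trans hx.1.le, hxl⟩, hx0⟩).not_gt hx.1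
  · exact hl ⟨hlx, hx.2⟩ hx0

noncomputable def wronskian (u v : ℝ → ℝ) (x : ℝ) : ℝ := deriv u x * v x - u x * deriv v x

theorem wronskian_const_mul (u v : ℝ → ℝ) (σ τ : ℝ) :
    wronskian (fun x => σ * u x) (fun x => τ * v x) = fun x => σ * τ * wronskian u v x := by
  ext x
  simp only [wronskian, deriv_const_mul_field']
  ring

theorem tendsto_wronskian_atBot {u v : ℝ → ℝ} (hu : Tendsto u atBot (𝓝 0))
    (hu' : Tendsto (deriv u) atBot (𝓝 0)) (hv : Tendsto v atBot (𝓝 0))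
    (hv' : Tendsto (deriv v) atBot (𝓝 0)) : Tendsto (wronskian u v) atBot (𝓝 0) := by
  have := (hu'.mul hv).sub (hu.mul hv')
  rw [mul_zero, sub_zero] at this
  exact this

section WronskianSign

variable {u v : ℝ → ℝ} {a : ℝ}

theorem wronskian_nonneg_of_pos_right (hu : DifferentiableAt ℝ u a) (hv : ContinuousAt v a)
    (ha : u a = 0) (hpos : ∀ᶠ x in 𝓝[>] a, 0 < u x ∧ 0 < v x) : 0 ≤ wronskian u v a := by
  have hu' : 0 ≤ deriv u a := by
    refine ge_of_tendsto ((hasDerivAt_iff_tendsto_slope.1 hu.hasDerivAt).mono_left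
      (nhdsGT_le_nhdsNE a)) ?_
    filter_upwards [hpos, self_mem_nhdsWithin] with x hx (hxa : a < x)
    rw [slope_def_field, ha, sub_zero]
    exact div_nonneg hx.1.le (sub_nonneg.2 hxa.le)
  have hv0 : 0 ≤ v a :=
    ge_of_tendsto (hv.tendsto.mono_left nhdsWithin_le_nhds) (hpos.mono fun x hx => hx.2.le)
  simpa [wronskian, ha] using mul_nonneg hu' hv0

theorem wronskian_nonpos_of_pos_left (hu : DifferentiableAt ℝ u a) (hv : ContinuousAt v a)
    (ha : u a = 0) (hpos : ∀ᶠ x in 𝓝[<] a, 0 < u x ∧ 0 < v x) : wronskian u v a ≤ 0 := by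
  have hu' : deriv u a ≤ 0 := by
    refine le_of_tendsto ((hasDerivAt_iff_tendsto_slope.1 hu.hasDerivAt).mono_left
      (nhdsLT_le_nhdsNE a)) ?_
    filter_upwards [hpos, self_mem_nhdsWithin] with x hx (hxa : x < a)
    rw [slope_def_field, ha, sub_zero]
    exact div_nonpos_of_nonneg_of_nonpos hx.1.le (sub_nonpos.2 hxa.le)
  have hv0 : 0 ≤ v a :=
    ge_of_tendsto (hv.tendsto.mono_left nhdsWithin_le_nhds) (hpos.mono fun x hx => hx.2.le)
  simpa [wronskian, ha] using mul_nonpos_of_nonpos_of_nonneg hu' hv0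

end WronskianSign

structure IsSturmSolution (q : ℝ → ℝ) (η : ℝ) (u : ℝ → ℝ) : Prop where
  differentiable : Differentiable ℝ u
  differentiable_deriv : Differentiable ℝ (deriv u)
  deriv_deriv : ∀ x ≤ η, deriv (deriv u) x = q x * u x

namespace IsSturmSolution

variable {q q₁ q₂ : ℝ → ℝ} {η : ℝ} {u v : ℝ → ℝ}

theorem continuous (hu : IsSturmSolution q η u) : Continuous u := hu.differentiable.continuous

theorem mono {b : ℝ} (hu : IsSturmSolution q η u) (hb : b ≤ η) : IsSturmSolution q b u :=
  ⟨hu.differentiable, hu.differentiable_deriv, fun x hx => hu.deriv_deriv x (hx.trans hb)⟩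

theorem const_mul (hu : IsSturmSolution q η u) (c : ℝ) :
    IsSturmSolution q η (fun x => c * u x) := by
  have hd : deriv (fun x => c * u x) = fun x => c * deriv u x :=
    funext fun x => deriv_const_mul c (hu.differentiable x)
  refine ⟨hu.differentiable.const_mul c, hd ▸ hu.differentiable_deriv.const_mul c, fun x hx => ?_⟩
  rw [hd, deriv_const_mul c (hu.differentiable_deriv x), hu.deriv_deriv x hx]
  ring

theorem eqOn_zero_of_deriv_eq_zero (hq : Continuous q) (hu : IsSturmSolution q η u) {x₀ : ℝ}
    (hx₀ : x₀ ≤ η) (h0 : u x₀ = 0) (h0' : deriv u x₀ = 0) : EqOn u 0 (Iic η) := by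
  intro y hy
  set a := min x₀ y
  set b := max x₀ y
  have hb : b ≤ η := max_le hx₀ hy
  obtain ⟨M, hM⟩ := (isCompact_Icc (a := a) (b := b)).exists_bound_of_continuousOn hq.continuousOn
  have hF : ∀ x ∈ Icc a b, HasDerivAt (fun x => (u x, deriv u x)) (deriv u x, q x * u x) x :=
    fun x hx => by
      simpa [hu.deriv_deriv x (hx.2.trans hb)] using
        (hu.differentiable x).hasDerivAt.prodMk (hu.differentiable_deriv x).hasDerivAt
  have hbound : ∀ x ∈ Icc a b, ‖(deriv u x, q x * u x)‖ ≤ (1 + M) * ‖(u x, deriv u x)‖ := by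
    intro x hx
    have hqx : ‖q x‖ ≤ M := hM x hx
    have hM0 : 0 ≤ M := (norm_nonneg _).trans hqx
    have hN := norm_nonneg (u x, deriv u x)
    refine (Prod.norm_def _).le.trans (max_le ?_ ?_)
    · calc ‖deriv u x‖ ≤ ‖(u x, deriv u x)‖ := norm_snd_le (u x, deriv u x)
        _ ≤ (1 + M) * ‖(u x, deriv u x)‖ := le_mul_of_one_le_left hN (by linarith)
    · calc ‖q x * u x‖ ≤ M * ‖(u x, deriv u x)‖ := by
            rw [norm_mul]; exact mul_le_mul hqx (norm_fst_le (u x, deriv u x)) (norm_nonneg _) hM0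
        _ ≤ (1 + M) * ‖(u x, deriv u x)‖ := by nlinarith
  have hy' : y ∈ Icc a b := ⟨min_le_right _ _, le_max_right _ _⟩
  exact congrArg Prod.fst (eqOn_zero_of_norm_deriv_le_mul_norm hF hbound
    ⟨min_le_left _ _, le_max_left _ _⟩ (by simp [h0, h0']) hy')

theorem deriv_ne_zero_of_eq_zero (hq : Continuous q) (hu : IsSturmSolution q η u)
    (hne : ¬ EqOn u 0 (Iic η)) {x₀ : ℝ} (hx₀ : x₀ ≤ η) (h0 : u x₀ = 0) : deriv u x₀ ≠ 0 :=
  fun h0' => hne (hu.eqOn_zero_of_deriv_eq_zero hq hx₀ h0 h0')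

theorem hasDerivAt_mul_deriv (hu : IsSturmSolution q η u) {x : ℝ} (hx : x ≤ η) :
    HasDerivAt (fun x => u x * deriv u x) (deriv u x ^ 2 + q x * u x ^ 2) x :=
  ((hu.differentiable x).hasDerivAt.mul (hu.differentiable_deriv x).hasDerivAt).congr_deriv
    (by rw [hu.deriv_deriv x hx]; ring)

theorem monotoneOn_mul_deriv (hu : IsSturmSolution q η u) (hq : ∀ x ≤ η, 0 ≤ q x) :
    MonotoneOn (fun x => u x * deriv u x) (Iic η) :=
  (convex_Iic η).monotoneOn_of_hasDerivAt_nonneg (fun x hx => hu.hasDerivAt_mul_deriv hx)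
    fun x hx => by have := hq x (mem_Iic.1 (interior_subset hx)); positivity

theorem mul_deriv_nonneg (hu : IsSturmSolution q η u) (hq : ∀ x ≤ η, 0 ≤ q x)
    (hint : IntegrableOn (fun x => u x ^ 2) (Iic η)) {x₀ : ℝ} (hx₀ : x₀ ≤ η) :
    0 ≤ u x₀ * deriv u x₀ := by
  by_contra! hneg
  set c := -(u x₀ * deriv u x₀)
  have hc : 0 < c := by linarith
  -- `u ^ 2` has slope at most `-2c` left of `x₀`, so it grows linearly towards `-∞`
  have hlin : MonotoneOn (fun x => -2 * c * x - u x ^ 2) (Iic x₀) :=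
    (convex_Iic x₀).monotoneOn_of_hasDerivAt_nonneg
      (fun x _ => ((hasDerivAt_id x).const_mul (-2 * c)).sub
        (((hu.differentiable x).hasDerivAt.pow 2)))
      fun x hx => by
        have hx : x ≤ x₀ := mem_Iic.1 (interior_subset hx)
        have := hu.monotoneOn_mul_deriv hq (hx.trans hx₀) hx₀ hx
        norm_num
        linarith
  have hd : x₀ - 1 / c ≤ x₀ := sub_le_self _ (one_div_pos.2 hc).le
  refine not_integrableOn_Iic_of_le one_pos (fun x hx => ?_)
    (hint.mono_set (Iic_subset_Iic.2 (hd.trans hx₀)))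
  have h1 : 1 ≤ (x₀ - x) * c := (div_le_iff₀ hc).1 (by linarith)
  have := hlin (mem_Iic.2 (hx.trans hd)) (mem_Iic.2 le_rfl) (hx.trans hd)
  nlinarith [sq_nonneg (u x₀)]

theorem tendsto_atBot (hu : IsSturmSolution q η u) (hq : ∀ x ≤ η, 0 ≤ q x)
    (hint : IntegrableOn (fun x => u x ^ 2) (Iic η)) :
    Tendsto u atBot (𝓝 0) ∧ Tendsto (deriv u) atBot (𝓝 0) := by
  have hf : ∀ x ≤ η, 0 ≤ u x * deriv u x := fun x hx => hu.mul_deriv_nonneg hq hint hx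
  have hsq : MonotoneOn (fun x => u x ^ 2) (Iic η) :=
    (convex_Iic η).monotoneOn_of_hasDerivAt_nonneg
      (fun x _ => (hu.differentiable x).hasDerivAt.pow 2) fun x hx => by
        have := hf x (mem_Iic.1 (interior_subset hx)); norm_num; linarith
  have hu0 : Tendsto u atBot (𝓝 0) :=
    tendsto_zero_of_tendsto_sq <| hsq.tendsto_atBot_zero (fun _ _ => sq_nonneg _) fun ε hε => by
      by_contra! h
      exact not_integrableOn_Iic_of_le hε h hint
  -- `(u' ^ 2)' = 2 q (u u') ≥ 0`
  have hdsq : MonotoneOn (fun x => deriv u x ^ 2) (Iic η) :=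
    (convex_Iic η).monotoneOn_of_hasDerivAt_nonneg
      (fun x _ => (hu.differentiable_deriv x).hasDerivAt.pow 2) fun x hx => by
        have hx : x ≤ η := mem_Iic.1 (interior_subset hx)
        have := mul_nonneg (hq x hx) (hf x hx)
        rw [hu.deriv_deriv x hx]; norm_num; nlinarith
  refine ⟨hu0, tendsto_zero_of_tendsto_sq <|
    hdsq.tendsto_atBot_zero (fun _ _ => sq_nonneg _) fun ε hε => ?_⟩
  -- far to the left `u` is small, so by the mean value theorem `u'` is small somewhere
  obtain ⟨N, hN⟩ := eventually_atBot.1 <| ((tendsto_zero_iff_abs_tendsto_zero u).1 hu0).eventually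
    (gt_mem_nhds (half_pos (sqrt_pos.2 hε)))
  set x := min N η
  obtain ⟨ξ, hξ, hξu⟩ := exists_deriv_eq_slope u (sub_one_lt x) hu.continuous.continuousOn
    hu.differentiable.differentiableOn
  refine ⟨ξ, hξ.2.le.trans (min_le_right _ _), ?_⟩
  have hsmall : |deriv u ξ| < √ε := by
    rw [hξu, sub_sub_cancel, div_one]
    have h1 : |u x| < √ε / 2 := hN x (min_le_left _ _)
    have h2 : |u (x - 1)| < √ε / 2 := hN (x - 1) (by linarith [min_le_left N η])
    calc |u x - u (x - 1)| ≤ |u x| + |u (x - 1)| := abs_sub _ _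
      _ < √ε := by linarith
  calc deriv u ξ ^ 2 = |deriv u ξ| ^ 2 := (sq_abs _).symm
    _ < √ε ^ 2 := by gcongr
    _ = ε := sq_sqrt hε.le

theorem hasDerivAt_wronskian (hu : IsSturmSolution q₁ η u) (hv : IsSturmSolution q₂ η v) {x : ℝ}
    (hx : x ≤ η) : HasDerivAt (wronskian u v) ((q₁ x - q₂ x) * (u x * v x)) x := by
  refine (((hu.differentiable_deriv x).hasDerivAt.mul (hv.differentiable x).hasDerivAt).sub
    ((hu.differentiable x).hasDerivAt.mul (hv.differentiable_deriv x).hasDerivAt)).congr_deriv ?_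
  rw [hu.deriv_deriv x hx, hv.deriv_deriv x hx]
  ring

theorem strictMonoOn_wronskian (hu : IsSturmSolution q₁ η u) (hv : IsSturmSolution q₂ η v)
    (hq : ∀ x ≤ η, q₂ x < q₁ x) {s : Set ℝ} (hs : Convex ℝ s) (hsη : s ⊆ Iic η)
    (hpos : ∀ x ∈ interior s, 0 < u x ∧ 0 < v x) : StrictMonoOn (wronskian u v) s :=
  hs.strictMonoOn_of_hasDerivAt_pos (fun _ hx => hu.hasDerivAt_wronskian hv (hsη hx))
    fun x hx => mul_pos (sub_pos.2 (hq x (hsη (interior_subset hx))))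
      (mul_pos (hpos x hx).1 (hpos x hx).2)

theorem not_forall_pos_Ioo_of_zeros (hu : IsSturmSolution q₁ η u) (hv : IsSturmSolution q₂ η v)
    (hq : ∀ x ≤ η, q₂ x < q₁ x) {a b : ℝ} (hab : a < b) (hb : b ≤ η) (ha0 : u a = 0)
    (hb0 : u b = 0) : ¬ ∀ x ∈ Ioo a b, 0 < u x ∧ 0 < v x := by
  intro hpos
  have hmono := hu.strictMonoOn_wronskian hv hq (convex_Icc a b)
    (fun x hx => hx.2.trans hb) (by rwa [interior_Icc])
  have hlt := hmono (left_mem_Icc.2 hab.le) (right_mem_Icc.2 hab.le) hab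
  have ha := wronskian_nonneg_of_pos_right (hu.differentiable a) hv.continuous.continuousAt ha0
    (eventually_of_mem (Ioo_mem_nhdsGT hab) hpos)
  have hb := wronskian_nonpos_of_pos_left (hu.differentiable b) hv.continuous.continuousAt hb0
    (eventually_of_mem (Ioo_mem_nhdsLT hab) hpos)
  linarith

theorem not_forall_pos_Iio_of_zero (hu : IsSturmSolution q₁ η u) (hv : IsSturmSolution q₂ η v)
    (hq : ∀ x ≤ η, q₂ x < q₁ x) (hW : Tendsto (wronskian u v) atBot (𝓝 0)) {c : ℝ}
    (hc : c ≤ η) (hc0 : u c = 0) : ¬ ∀ x < c, 0 < u x ∧ 0 < v x := by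
  intro hpos
  have hmono := hu.strictMonoOn_wronskian hv hq (convex_Iic c) (Iic_subset_Iic.2 hc)
    (by simpa using hpos)
  have hc1 : c - 1 ∈ Iic c := mem_Iic.2 (sub_one_lt c).le
  have h0 : 0 ≤ wronskian u v (c - 1) := le_of_tendsto hW <| by
    filter_upwards [Iic_mem_atBot (c - 1)] with m hm
    exact hmono.monotoneOn (mem_Iic.2 (le_trans hm hc1)) hc1 hm
  have hlt := hmono hc1 (mem_Iic.2 le_rfl) (sub_one_lt c)
  have hc := wronskian_nonpos_of_pos_left (hu.differentiable c) hv.continuous.continuousAt hc0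
    (eventually_mem_nhdsWithin.mono hpos)
  linarith

theorem exists_zero_Ioo_of_forall_ne (hu : IsSturmSolution q₁ η u) (hv : IsSturmSolution q₂ η v)
    (hq : ∀ x ≤ η, q₂ x < q₁ x) {a b : ℝ} (hab : a < b) (hb : b ≤ η) (ha0 : u a = 0)
    (hb0 : u b = 0) (hu0 : ∀ x ∈ Ioo a b, u x ≠ 0) : ∃ c ∈ Ioo a b, v c = 0 := by
  by_contra! hv0
  obtain ⟨σ, hσ⟩ := isPreconnected_Ioo.exists_forall_mul_pos hu.continuous.continuousOn hu0
  obtain ⟨τ, hτ⟩ := isPreconnected_Ioo.exists_forall_mul_pos hv.continuous.continuousOn hv0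
  exact (hu.const_mul σ).not_forall_pos_Ioo_of_zeros (hv.const_mul τ) hq hab hb (by simp [ha0])
    (by simp [hb0]) fun x hx => ⟨hσ x hx, hτ x hx⟩

theorem exists_zero_Iio_of_forall_ne (hu : IsSturmSolution q₁ η u) (hv : IsSturmSolution q₂ η v)
    (hq : ∀ x ≤ η, q₂ x < q₁ x) (hW : Tendsto (wronskian u v) atBot (𝓝 0)) {c : ℝ}
    (hc : c ≤ η) (hc0 : u c = 0) (hu0 : ∀ x < c, u x ≠ 0) : ∃ x < c, v x = 0 := by
  by_contra! hv0
  obtain ⟨σ, hσ⟩ := isPreconnected_Iio.exists_forall_mul_pos hu.continuous.continuousOn hu0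
  obtain ⟨τ, hτ⟩ := isPreconnected_Iio.exists_forall_mul_pos hv.continuous.continuousOn hv0
  refine (hu.const_mul σ).not_forall_pos_Iio_of_zero (hv.const_mul τ) hq ?_ hc (by simp [hc0])
    fun x hx => ⟨hσ x hx, hτ x hx⟩
  rw [wronskian_const_mul]
  simpa using hW.const_mul (σ * τ)

theorem exists_zero_Ioo (hq₁ : Continuous q₁) (hu : IsSturmSolution q₁ η u)
    (hne : ¬ EqOn u 0 (Iic η)) (hv : IsSturmSolution q₂ η v) (hq : ∀ x ≤ η, q₂ x < q₁ x) {a b : ℝ}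
    (hab : a < b) (hb : b ≤ η) (ha0 : u a = 0) (hb0 : u b = 0) : ∃ c ∈ Ioo a b, v c = 0 := by
  obtain ⟨a', ha', ha'0, hu0⟩ := exists_last_zero_Ico hu.continuous
    (hu.differentiable b).hasDerivAt (hu.deriv_ne_zero_of_eq_zero hq₁ hne hb hb0) hab ha0
  obtain ⟨c, hc, hc0⟩ := hu.exists_zero_Ioo_of_forall_ne hv hq ha'.2 hb ha'0 hb0 hu0
  exact ⟨c, ⟨ha'.1.trans_lt hc.1, hc.2⟩, hc0⟩

theorem exists_zero_Iio (hq₁ : Continuous q₁) (hu : IsSturmSolution q₁ η u)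
    (hne : ¬ EqOn u 0 (Iic η)) (hv : IsSturmSolution q₂ η v) (hq : ∀ x ≤ η, q₂ x < q₁ x)
    (hW : Tendsto (wronskian u v) atBot (𝓝 0)) {c : ℝ} (hc : c ≤ η) (hc0 : u c = 0) :
    ∃ x < c, v x = 0 := by
  by_cases h : ∃ a < c, u a = 0
  · obtain ⟨a, hac, ha0⟩ := h
    obtain ⟨x, hx, hx0⟩ := hu.exists_zero_Ioo hq₁ hne hv hq hac hc ha0 hc0
    exact ⟨x, hx.2, hx0⟩
  · exact hu.exists_zero_Iio_of_forall_ne hv hq hW hc hc0 fun x hx hx0 => h ⟨x, hx, hx0⟩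

theorem exists_finset_zeros_lt (hq₁ : Continuous q₁) (hu : IsSturmSolution q₁ η u)
    (hne : ¬ EqOn u 0 (Iic η)) (hv : IsSturmSolution q₂ η v) (hq : ∀ x ≤ η, q₂ x < q₁ x)
    (hW : Tendsto (wronskian u v) atBot (𝓝 0)) (Z : Finset ℝ) (hZ : ∀ z ∈ Z, z ≤ η ∧ u z = 0) :
    ∃ T : Finset ℝ, Z.card ≤ T.card ∧ ∀ t ∈ T, t < η ∧ v t = 0 := by
  classical
  suffices ∃ T : Finset ℝ, Z.card ≤ T.card ∧ ∀ t ∈ T, v t = 0 ∧ ∃ z ∈ Z, t < z by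
    obtain ⟨T, hcard, hT⟩ := this
    refine ⟨T, hcard, fun t ht => ?_⟩
    obtain ⟨ht0, z, hz, htz⟩ := hT t ht
    exact ⟨htz.trans_le (hZ z hz).1, ht0⟩
  induction Z using Finset.induction_on_max with
  | empty => exact ⟨∅, by simp, by simp⟩
  | insert z S hSz ih =>
    obtain ⟨T, hcard, hT⟩ := ih fun s hs => hZ s (Finset.mem_insert_of_mem hs)
    obtain ⟨hzη, hz0⟩ := hZ z (Finset.mem_insert_self z S)
    obtain ⟨t, ht0, htz, hSt⟩ : ∃ t, v t = 0 ∧ t < z ∧ ∀ s ∈ S, s < t := by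
      rcases S.eq_empty_or_nonempty with rfl | hS
      · obtain ⟨t, htz, ht0⟩ := hu.exists_zero_Iio hq₁ hne hv hq hW hzη hz0
        exact ⟨t, ht0, htz, by simp⟩
      · have hmax := S.max'_mem hS
        obtain ⟨t, ht, ht0⟩ := hu.exists_zero_Ioo hq₁ hne hv hq (hSz _ hmax) hzη
          (hZ _ (Finset.mem_insert_of_mem hmax)).2 hz0
        exact ⟨t, ht0, ht.2, fun s hs => (S.le_max' s hs).trans_lt ht.1⟩
    have htT : t ∉ T := fun ht => by
      obtain ⟨-, s, hs, hts⟩ := hT t ht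
      exact (hts.trans (hSt s hs)).false
    refine ⟨insert t T, ?_, fun t' ht' => ?_⟩
    · rw [Finset.card_insert_of_notMem htT]
      exact (Finset.card_insert_le z S).trans (Nat.add_le_add_right hcard 1)
    · rcases Finset.mem_insert.1 ht' with rfl | ht'
      · exact ⟨ht0, z, Finset.mem_insert_self z S, htz⟩
      · obtain ⟨ht'0, s, hs, hts⟩ := hT t' ht'
        exact ⟨ht'0, s, Finset.mem_insert_of_mem hs, hts⟩

theorem wronskian_eq_zero (hu : IsSturmSolution q η u) (hv : IsSturmSolution q η v)
    (hW : Tendsto (wronskian u v) atBot (𝓝 0)) {x : ℝ} (hx : x ≤ η) : wronskian u v x = 0 := by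
  have hW' : ∀ y ≤ η, HasDerivAt (wronskian u v) 0 y := fun y hy => by
    simpa using hu.hasDerivAt_wronskian hv hy
  have hconst : ∀ m ≤ x, wronskian u v m = wronskian u v x := fun m hm =>
    (constant_of_has_deriv_right_zero
      (fun y hy => (hW' y (hy.2.trans hx)).continuousAt.continuousWithinAt)
      (fun y hy => (hW' y (hy.2.le.trans hx)).hasDerivWithinAt) x ⟨hm, le_rfl⟩).symm
  refine tendsto_const_nhds_iff.1 (hW.congr' ?_)
  filter_upwards [Iic_mem_atBot x] with m hm using hconst m hm

theorem eq_zero_of_eq_zero_of_tendsto_wronskian (hq : Continuous q) (hu : IsSturmSolution q η u)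
    (hne : ¬ EqOn u 0 (Iic η)) (hv : IsSturmSolution q η v)
    (hW : Tendsto (wronskian u v) atBot (𝓝 0)) {z : ℝ} (hz : z ≤ η) (hz0 : u z = 0) :
    v z = 0 := by
  have h := hu.wronskian_eq_zero hv hW hz
  rw [wronskian, hz0, zero_mul, sub_zero] at h
  exact (mul_eq_zero.1 h).resolve_left (hu.deriv_ne_zero_of_eq_zero hq hne hz hz0)

end IsSturmSolution

section Hermite

open Polynomial

-- Mathlib's `Polynomial.hermite` is the probabilists' version, adapted to `e^{-x²/4}`.
noncomputable def physHermite : ℕ → ℝ[X]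
  | 0 => 1
  | n + 1 => 2 * X * physHermite n - derivative (physHermite n)

theorem physHermite_succ (n : ℕ) :
    physHermite (n + 1) = 2 * X * physHermite n - derivative (physHermite n) := rfl

theorem derivative_physHermite_succ (n : ℕ) :
    derivative (physHermite (n + 1)) = 2 * (n + 1) * physHermite n := by
  induction n with
  | zero => simp [physHermite]
  | succ n ih =>
    have ih' : derivative (derivative (physHermite (n + 1))) =
        2 * (n + 1) * derivative (physHermite n) := by
      rw [ih, derivative_mul]; simp
    rw [physHermite_succ (n + 1), derivative_sub, derivative_mul, ih', ih, physHermite_succ n]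
    simp
    ring

theorem physHermite_ode (n : ℕ) :
    derivative (derivative (physHermite n)) - 2 * X * derivative (physHermite n) +
      2 * (n : ℝ[X]) * physHermite n = 0 := by
  have h : derivative (physHermite n) = 2 * X * physHermite n - physHermite (n + 1) := by
    rw [physHermite_succ]; ring
  rw [h, derivative_sub, derivative_mul, derivative_physHermite_succ, h]
  simp
  ring

theorem degree_physHermite (n : ℕ) : (physHermite n).degree = n := by
  induction n with
  | zero => simp [physHermite]
  | succ n ih =>
    have hne : physHermite n ≠ 0 := fun h => by simp [h] at ih
    have hlead : (2 * X * physHermite n).degree = ↑(n + 1) := by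
      rw [degree_mul, degree_mul, ih, degree_X, ← C_ofNat, degree_C two_ne_zero, zero_add,
        add_comm, Nat.cast_succ]
    have hder : (derivative (physHermite n)).degree < ↑(n + 1) :=
      (degree_derivative_lt hne).trans_le (by rw [ih]; exact_mod_cast n.le_succ)
    rw [physHermite_succ, degree_sub_eq_left_of_degree_lt (hlead ▸ hder), hlead]

theorem hasDerivAt_gaussian_mul_eval (P : ℝ[X]) (x : ℝ) :
    HasDerivAt (fun x => rexp (-x ^ 2 / 2) * P.eval x)
      (rexp (-x ^ 2 / 2) * (derivative P - X * P).eval x) x := by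
  have hg : HasDerivAt (fun x => rexp (-x ^ 2 / 2)) (rexp (-x ^ 2 / 2) * -x) x := by
    convert ((hasDerivAt_pow 2 x).fun_neg.div_const 2).exp using 1
    norm_num
    ring
  refine (hg.mul (P.hasDerivAt x)).congr_deriv ?_
  rw [eval_sub, eval_mul, eval_X]
  ring

theorem deriv_gaussian_mul_eval (P : ℝ[X]) :
    deriv (fun x => rexp (-x ^ 2 / 2) * P.eval x) =
      fun x => rexp (-x ^ 2 / 2) * (derivative P - X * P).eval x :=
  funext fun x => (hasDerivAt_gaussian_mul_eval P x).deriv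

theorem tendsto_gaussian_mul_eval_atBot (P : ℝ[X]) :
    Tendsto (fun x => rexp (-x ^ 2 / 2) * P.eval x) atBot (𝓝 0) := by
  induction P using Polynomial.induction_on' with
  | add p q hp hq => simpa [mul_add] using hp.add hq
  | monomial k c =>
    have h := ((tendsto_rpow_abs_mul_exp_neg_mul_sq_cocompact one_half_pos k).mono_left
      atBot_le_cocompact).const_mul |c|
    rw [mul_zero] at h
    refine squeeze_zero_norm (fun x => le_of_eq ?_) h
    rw [eval_monomial, Real.norm_eq_abs, abs_mul, abs_mul, abs_of_pos (exp_pos _), abs_pow,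
      Real.rpow_natCast]
    ring_nf

noncomputable def hermiteFunction (n : ℕ) (x : ℝ) : ℝ := rexp (-x ^ 2 / 2) * (physHermite n).eval x

theorem isSturmSolution_hermiteFunction (n : ℕ) (η : ℝ) :
    IsSturmSolution (fun x => x ^ 2 - (2 * n + 1)) η (hermiteFunction n) := by
  have hd : deriv (hermiteFunction n) = _ := deriv_gaussian_mul_eval (physHermite n)
  refine ⟨fun x => (hasDerivAt_gaussian_mul_eval _ x).differentiableAt,
    hd ▸ fun x => (hasDerivAt_gaussian_mul_eval _ x).differentiableAt, fun x _ => ?_⟩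
  have hode := congrArg (eval x) (physHermite_ode n)
  simp only [eval_add, eval_sub, eval_mul, eval_X, eval_ofNat, eval_natCast, eval_zero] at hode
  rw [hd, deriv_gaussian_mul_eval, hermiteFunction]
  simp only [derivative_sub, derivative_mul, derivative_X, eval_sub, eval_mul, eval_add,
    eval_X, eval_one]
  linear_combination rexp (-x ^ 2 / 2) * hode

theorem tendsto_hermiteFunction_atBot (n : ℕ) :
    Tendsto (hermiteFunction n) atBot (𝓝 0) ∧ Tendsto (deriv (hermiteFunction n)) atBot (𝓝 0) :=
  ⟨tendsto_gaussian_mul_eval_atBot _, (deriv_gaussian_mul_eval (physHermite n)).symm ▸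
    tendsto_gaussian_mul_eval_atBot _⟩

theorem card_le_of_forall_hermiteFunction_eq_zero {n : ℕ} {T : Finset ℝ}
    (hT : ∀ t ∈ T, hermiteFunction n t = 0) : T.card ≤ n := by
  have hne : physHermite n ≠ 0 := fun h => by simpa [h] using degree_physHermite n
  calc T.card ≤ (physHermite n).natDegree := card_le_degree_of_subset_roots fun t ht => by
        simpa [mem_roots hne, hermiteFunction, exp_ne_zero] using hT t ht
    _ = n := natDegree_eq_of_degree_eq_some (degree_physHermite n)

end Hermite

namespace IsOscEigenfun

variable {η lam : ℝ} {u : ℝ → ℝ}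

theorem isSturmSolution (hu : IsOscEigenfun η lam u) :
    IsSturmSolution (fun x => x ^ 2 - lam) η u := by
  have h2 : ContDiff ℝ (1 + 1) u := hu.1
  refine ⟨hu.1.differentiable (by norm_num),
    (contDiff_succ_iff_deriv.1 h2).2.2.differentiable one_ne_zero, fun x hx => ?_⟩
  linarith [hu.2.1 x hx]

theorem not_eqOn_zero (hu : IsOscEigenfun η lam u) : ¬ EqOn u 0 (Iic η) := fun h => by
  have := hu.2.2.2
  rw [setIntegral_congr_fun (g := fun _ => 0) measurableSet_Iic fun x hx => by simp [h hx]]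
    at this
  simp at this

theorem tendsto_atBot (hu : IsOscEigenfun η lam u) :
    Tendsto u atBot (𝓝 0) ∧ Tendsto (deriv u) atBot (𝓝 0) := by
  have hint : IntegrableOn (fun x => u x ^ 2) (Iic η) := hu.2.2.1
  refine (hu.isSturmSolution.mono (min_le_left η (-√|lam|))).tendsto_atBot (fun x hx => ?_)
    (hint.mono_set (Iic_subset_Iic.2 (min_le_left _ _)))
  have hx' : x ≤ -√|lam| := hx.trans (min_le_right _ _)
  nlinarith [sq_sqrt (abs_nonneg lam), le_abs_self lam, sqrt_nonneg |lam|]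

theorem exists_finset_zeros_of_le {mu : ℝ} {v : ℝ → ℝ} (hu : IsOscEigenfun η lam u)
    (hv : IsSturmSolution (fun x => x ^ 2 - mu) η v)
    (hv0 : Tendsto v atBot (𝓝 0) ∧ Tendsto (deriv v) atBot (𝓝 0)) (hle : lam ≤ mu)
    (Z : Finset ℝ) (hZ : ∀ z ∈ Z, z ≤ η ∧ u z = 0) :
    ∃ T : Finset ℝ, Z.card ≤ T.card ∧ ∀ t ∈ T, t ≤ η ∧ v t = 0 := by
  have hW := tendsto_wronskian_atBot hu.tendsto_atBot.1 hu.tendsto_atBot.2 hv0.1 hv0.2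
  have hq : Continuous fun x : ℝ => x ^ 2 - lam := by fun_prop
  rcases hle.lt_or_eq with hlt | rfl
  · obtain ⟨T, hcard, hT⟩ := hu.isSturmSolution.exists_finset_zeros_lt hq hu.not_eqOn_zero hv
      (fun x _ => by linarith) hW Z hZ
    exact ⟨T, hcard, fun t ht => ⟨(hT t ht).1.le, (hT t ht).2⟩⟩
  · exact ⟨Z, le_rfl, fun z hz => ⟨(hZ z hz).1,
      hu.isSturmSolution.eq_zero_of_eq_zero_of_tendsto_wronskian hq hu.not_eqOn_zero hv hW
        (hZ z hz).1 (hZ z hz).2⟩⟩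

theorem exists_finset_zeros_of_strictMono {lam : ℕ → ℝ} (hmono : StrictMono lam)
    (hdir : ∀ k, IsDirEV η (lam k)) (n : ℕ) (hu : IsOscEigenfun η (lam n) u) (huη : u η = 0) :
    ∃ Z : Finset ℝ, n + 1 ≤ Z.card ∧ ∀ z ∈ Z, z ≤ η ∧ u z = 0 := by
  induction n generalizing u with
  | zero => exact ⟨{η}, by simp, by simpa using huη⟩
  | succ n ih =>
    obtain ⟨w, hw, hwη⟩ := hdir n
    obtain ⟨Z, hZcard, hZ⟩ := ih hw hwη
    obtain ⟨T, hZT, hT⟩ := hw.isSturmSolution.exists_finset_zeros_lt (by fun_prop)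
      hw.not_eqOn_zero hu.isSturmSolution (fun x _ => by linarith [hmono n.lt_succ_self])
      (tendsto_wronskian_atBot hw.tendsto_atBot.1 hw.tendsto_atBot.2 hu.tendsto_atBot.1
        hu.tendsto_atBot.2) Z hZ
    have hηT : η ∉ T := fun h => (hT η h).1.false
    refine ⟨insert η T, by rw [Finset.card_insert_of_notMem hηT]; omega, fun z hz => ?_⟩
    rcases Finset.mem_insert.1 hz with rfl | hz
    · exact ⟨le_rfl, huη⟩
    · exact ⟨(hT z hz).1.le, (hT z hz).2⟩

end IsOscEigenfun

/-- each Dirichlet eigenvalue `λ_{D,n}(η)` is strictly greater than `2n+1`. -/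
theorem dirichlet_eigenvalue_gt_landau
    (lamD : ℕ → ℝ → ℝ)
    (hD : ∀ η : ℝ, EnumeratesEV (IsDirEV η) (fun n => lamD n η)) :
    ∀ (n : ℕ) (η : ℝ), (2 * n + 1 : ℝ) < lamD n η := by
  intro n η
  obtain ⟨u, hu, huη⟩ := (hD η).2.1 n
  obtain ⟨Z, hZcard, hZ⟩ := hu.exists_finset_zeros_of_strictMono (hD η).1 (hD η).2.1 n huη
  by_contra! hle
  obtain ⟨T, hZT, hT⟩ := hu.exists_finset_zeros_of_le (isSturmSolution_hermiteFunction n η)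
    (tendsto_hermiteFunction_atBot n) hle Z hZ
  have := card_le_of_forall_hermiteFunction_eq_zero fun t ht => (hT t ht).2
  omega
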